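/- Fix R > 0 and suppose ζ λ > 0 or ξ > 0. For each n > 0 let W_n be the piecewise-linear function with parameters β_n = √(n/(2π)) (2^{2R} − 1)^{−1/2}, ϑ_n = θ + √(π/2)/β_n, ρ_n = θ − √(π/2)/β_n, where θ = 2^R − 1. Then as n → ∞ the approximated outage probability converges to the classical outage probability: lim_{n→∞} ∫_0^∞ W_n(z) f(z) dz = F(2^R − 1) = 1 − exp(−ζλ (2^R − 1)^{2/α} − ξ (2^R − 1)). (In the large-blocklength limit the outage probability is expressed as Pr[SINR < γ_th] with SINR threshold γ_th = 2^R − 1.) -/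

import Mathlib

/-!
The SINR law has survival function `exp (-(c z^q) - ξ z)`, so its partial integrals
`∫_0^t f` are `1 - exp (-(c t^q) - ξ t)`, a continuous function of `t`. Each `W_n` takes values
in `[0, 1]`, equals `1` up to `ρ_n` and `0` beyond `ϑ_n`, which squeezes `∫_0^∞ W_n f` between
the partial integrals up to `ρ_n` and up to `ϑ_n`. Both of these tend to the partial integral up
to `θ` because `ρ_n, ϑ_n = θ ∓ √(π/2)/β_n` and `β_n → ∞`.
-/

open MeasureTheory Set Real Filter Topology

/-- With `c = ζ λ` and `q = 2/α`, this is `1 - F`. -/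
noncomputable def sinrSurvival (c ξ q z : ℝ) : ℝ := exp (-(c * z ^ q) - ξ * z)

noncomputable def sinrDensity (c ξ q z : ℝ) : ℝ := (c * q * z ^ (q - 1) + ξ) * sinrSurvival c ξ q z

section SINR

variable {c ξ q : ℝ}

theorem sinrSurvival_zero (hq : q ≠ 0) : sinrSurvival c ξ q 0 = 1 := by
  simp [sinrSurvival, zero_rpow hq]

theorem continuous_sinrSurvival (hq : 0 ≤ q) : Continuous (sinrSurvival c ξ q) := by
  have hpow : Continuous fun z : ℝ => z ^ q :=
    continuous_iff_continuousAt.2 fun x => continuousAt_rpow_const x q (Or.inr hq)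
  unfold sinrSurvival
  fun_prop

theorem hasDerivAt_sinrSurvival {x : ℝ} (hx : 0 < x) :
    HasDerivAt (sinrSurvival c ξ q) (-sinrDensity c ξ q x) x := by
  have hexp := ((((hasDerivAt_rpow_const (p := q) (Or.inl hx.ne')).const_mul c).neg).sub
    ((hasDerivAt_id x).const_mul ξ)).exp
  convert hexp using 1
  · rfl
  · unfold sinrDensity sinrSurvival
    simp only [Pi.sub_apply, Pi.neg_apply, id]
    ring

theorem sinrDensity_nonneg (hc : 0 ≤ c) (hξ : 0 ≤ ξ) (hq : 0 ≤ q) {z : ℝ} (hz : 0 ≤ z) :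
    0 ≤ sinrDensity c ξ q z := by
  unfold sinrDensity sinrSurvival
  have hpow := rpow_nonneg hz (q - 1)
  positivity

theorem measurable_sinrDensity : Measurable (sinrDensity c ξ q) := by
  unfold sinrDensity sinrSurvival
  fun_prop

theorem intervalIntegrable_sinrDensity (hq : 0 < q) (t : ℝ) :
    IntervalIntegrable (sinrDensity c ξ q) volume 0 t :=
  (((intervalIntegral.intervalIntegrable_rpow' (by linarith)).const_mul _).add
    intervalIntegrable_const).mul_continuousOn (continuous_sinrSurvival hq.le).continuousOn

theorem integrableOn_Ioc_sinrDensity (hq : 0 < q) (t : ℝ) :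
    IntegrableOn (sinrDensity c ξ q) (Ioc 0 t) :=
  (intervalIntegrable_iff.1 (intervalIntegrable_sinrDensity hq t)).mono_set Ioc_subset_uIoc

theorem setIntegral_Ioc_sinrDensity (hq : 0 < q) {t : ℝ} (ht : 0 ≤ t) :
    ∫ z in Ioc 0 t, sinrDensity c ξ q z = 1 - sinrSurvival c ξ q t := by
  have hFTC := intervalIntegral.integral_eq_sub_of_hasDeriv_right_of_le ht
    (continuous_sinrSurvival (c := c) (ξ := ξ) hq.le).neg.continuousOn
    (fun x hx => (hasDerivAt_sinrSurvival hx.1).neg.hasDerivWithinAt)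
    (by simpa using intervalIntegrable_sinrDensity hq t)
  simp only [neg_neg, Pi.neg_apply, sinrSurvival_zero hq.ne'] at hFTC
  rw [← intervalIntegral.integral_of_le ht, hFTC]
  ring

end SINR

/-- `W_n = ramp θ (√(π/2)/β_n) (β_n/√(2π))`. -/
noncomputable def ramp (θ d k t : ℝ) : ℝ :=
  if t ≤ θ - d then 1 else if t < θ + d then 1/2 - k * (t - θ) else 0

section Ramp

variable {θ d k : ℝ}

theorem measurable_ramp : Measurable (ramp θ d k) :=
  Measurable.ite measurableSet_Iic measurable_const <|
    Measurable.ite measurableSet_Iio (by fun_prop) measurable_const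

theorem ramp_mem_Icc (hkd : k * d = 1/2) (t : ℝ) : ramp θ d k t ∈ Icc 0 1 := by
  unfold ramp
  split_ifs with h₁ h₂
  · norm_num
  · have hd : 0 < d := by linarith
    have hk : 0 < k := by nlinarith
    constructor <;> nlinarith
  · norm_num

theorem ramp_of_le {t : ℝ} (ht : t ≤ θ - d) : ramp θ d k t = 1 := if_pos ht

theorem ramp_of_lt (hd : 0 ≤ d) {t : ℝ} (ht : θ + d < t) : ramp θ d k t = 0 := by
  rw [ramp, if_neg (by linarith), if_neg ht.not_gt]

end Ramp

theorem setIntegral_mul_mem_Icc {f w : ℝ → ℝ} {a b : ℝ} (hf : Measurable f) (hw : Measurable w)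
    (hf0 : ∀ z > 0, 0 ≤ f z) (hfi : IntegrableOn f (Ioc 0 b)) (hw01 : ∀ t, w t ∈ Icc 0 1)
    (hone : ∀ t ≤ a, w t = 1) (hzero : ∀ t, b < t → w t = 0) :
    ∫ z in Ioi 0, w z * f z ∈ Icc (∫ z in Ioc 0 a, f z) (∫ z in Ioc 0 b, f z) := by
  have hIoc (c : ℝ) : ∫ z in Ioc 0 c, f z = ∫ z in Ioi 0, (Ioc 0 c).indicator f z := by
    rw [setIntegral_indicator measurableSet_Ioc, inter_eq_right.2 Ioc_subset_Ioi_self]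
  have hlower : ∀ z > 0, (Ioc 0 a).indicator f z ≤ w z * f z := fun z hz => by
    by_cases hza : z ≤ a
    · rw [indicator_of_mem (show z ∈ Ioc 0 a from ⟨hz, hza⟩), hone z hza, one_mul]
    · rw [indicator_of_notMem (fun h => hza h.2)]
      exact mul_nonneg (hw01 z).1 (hf0 z hz)
  have hupper : ∀ z > 0, w z * f z ≤ (Ioc 0 b).indicator f z := fun z hz => by
    by_cases hzb : z ≤ b
    · rw [indicator_of_mem (show z ∈ Ioc 0 b from ⟨hz, hzb⟩)]
      exact mul_le_of_le_one_left (hf0 z hz) (hw01 z).2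
    · rw [indicator_of_notMem (fun h => hzb h.2), hzero z (not_le.1 hzb), zero_mul]
  have hmul_nonneg : ∀ z > 0, 0 ≤ w z * f z := fun z hz => mul_nonneg (hw01 z).1 (hf0 z hz)
  have hbound : Integrable ((Ioc 0 b).indicator f) (volume.restrict (Ioi 0)) :=
    (hfi.integrable_indicator measurableSet_Ioc).restrict
  have hint : IntegrableOn (fun z => w z * f z) (Ioi 0) :=
    hbound.mono' (hw.mul hf).aestronglyMeasurable <| ae_restrict_of_forall_mem measurableSet_Ioi
      fun z hz => by
        rw [norm_of_nonneg (hmul_nonneg z hz)]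
        exact hupper z hz
  rw [hIoc, hIoc]
  exact ⟨integral_mono_of_nonneg
      (ae_restrict_of_forall_mem measurableSet_Ioi fun z _ => indicator_nonneg
        (fun y hy => hf0 y hy.1) z)
      hint (ae_restrict_of_forall_mem measurableSet_Ioi hlower),
    integral_mono_of_nonneg (ae_restrict_of_forall_mem measurableSet_Ioi hmul_nonneg)
      hbound (ae_restrict_of_forall_mem measurableSet_Ioi hupper)⟩

theorem tendsto_setIntegral_ramp_mul {ι : Type*} {l : Filter ι} {f : ℝ → ℝ} {θ : ℝ}
    (hf : Measurable f) (hf0 : ∀ z > 0, 0 ≤ f z) (hfi : ∀ t, IntegrableOn f (Ioc 0 t))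
    (hF : ContinuousAt (fun t => ∫ z in Ioc 0 t, f z) θ) {d k : ι → ℝ}
    (hd : Tendsto d l (𝓝 0)) (hd0 : ∀ᶠ n in l, 0 ≤ d n) (hkd : ∀ᶠ n in l, k n * d n = 1/2) :
    Tendsto (fun n => ∫ z in Ioi 0, ramp θ (d n) (k n) z * f z) l
      (𝓝 (∫ z in Ioc 0 θ, f z)) := by
  have hlo : Tendsto (fun n => θ - d n) l (𝓝 θ) := by
    simpa using (tendsto_const_nhds (x := θ)).sub hd
  have hhi : Tendsto (fun n => θ + d n) l (𝓝 θ) := by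
    simpa using (tendsto_const_nhds (x := θ)).add hd
  have hsandwich : ∀ᶠ n in l, ∫ z in Ioi 0, ramp θ (d n) (k n) z * f z ∈
      Icc (∫ z in Ioc 0 (θ - d n), f z) (∫ z in Ioc 0 (θ + d n), f z) := by
    filter_upwards [hd0, hkd] with n hdn hkdn
    exact setIntegral_mul_mem_Icc hf measurable_ramp hf0 (hfi _) (ramp_mem_Icc hkdn)
      (fun _ => ramp_of_le) (fun _ => ramp_of_lt hdn)
  exact tendsto_of_tendsto_of_tendsto_of_le_of_le' (hF.tendsto.comp hlo) (hF.tendsto.comp hhi)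
    (hsandwich.mono fun _ h => h.1) (hsandwich.mono fun _ h => h.2)

theorem sqrt_pi_div_two_div_sqrt_two_mul_pi : √(π / 2) / √(2 * π) = 1 / 2 := by
  rw [← sqrt_div (by positivity), show π / 2 / (2 * π) = (1 / 2) ^ 2 by field_simp,
    sqrt_sq (by norm_num)]

theorem tendsto_sqrt_div_mul_atTop {a C : ℝ} (ha : 0 < a) (hC : 0 < C) :
    Tendsto (fun n => √(n / a) * C) atTop atTop :=
  (tendsto_sqrt_atTop.comp (tendsto_id.atTop_div_const ha)).atTop_mul_const hC

theorem stmt_12_general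
    (α ζ lam ξ R : ℝ) (hα : 2 < α) (hζ : 0 ≤ ζ) (hlam : 0 ≤ lam) (hξ : 0 ≤ ξ)
    (hR : 0 < R)
    (f : ℝ → ℝ)
    (hf : ∀ z > (0:ℝ), f z = (2 * ζ * lam / α * z ^ (2/α - 1) + ξ) *
      Real.exp (-(ζ * lam * z ^ (2/α)) - ξ * z))
    (θ : ℝ) (hθ : θ = 2 ^ R - 1)
    (β ϑ ρ : ℝ → ℝ)
    (hβ : ∀ n > (0:ℝ), β n = Real.sqrt (n / (2 * Real.pi)) * (2 ^ (2 * R) - 1) ^ (-(1:ℝ)/2))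
    (hϑ : ∀ n > (0:ℝ), ϑ n = θ + Real.sqrt (Real.pi / 2) / β n)
    (hρ : ∀ n > (0:ℝ), ρ n = θ - Real.sqrt (Real.pi / 2) / β n)
    (W : ℝ → ℝ → ℝ)
    (hW : ∀ n > (0:ℝ), ∀ t, W n t = if t ≤ ρ n then 1
      else if t < ϑ n then 1/2 - β n / Real.sqrt (2 * Real.pi) * (t - θ) else 0) :
    Tendsto (fun n => ∫ z in Set.Ioi (0:ℝ), W n z * f z) atTop
      (nhds (1 - Real.exp (-(ζ * lam * (2 ^ R - 1) ^ (2/α)) - ξ * (2 ^ R - 1)))) := by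
  have hq : 0 < 2 / α := by positivity
  have hθ0 : 0 < θ := by linarith [hθ, one_lt_rpow one_lt_two hR]
  have hβ_top : Tendsto β atTop atTop := by
    have h4R : (1 : ℝ) < 2 ^ (2 * R) := one_lt_rpow one_lt_two (by linarith)
    refine (tendsto_sqrt_div_mul_atTop (a := 2 * π) (by positivity)
      (rpow_pos_of_pos (sub_pos.2 h4R) (-(1:ℝ)/2))).congr' ?_
    filter_upwards [eventually_gt_atTop 0] with n hn using (hβ n hn).symm
  have hF : (fun t => ∫ z in Ioc 0 t, sinrDensity (ζ * lam) ξ (2 / α) z) =ᶠ[𝓝 θ]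
      fun t => 1 - sinrSurvival (ζ * lam) ξ (2 / α) t := by
    filter_upwards [lt_mem_nhds hθ0] with t ht using setIntegral_Ioc_sinrDensity hq ht.le
  have hlim := tendsto_setIntegral_ramp_mul (l := atTop) measurable_sinrDensity
    (fun z hz => sinrDensity_nonneg (mul_nonneg hζ hlam) hξ hq.le hz.le)
    (integrableOn_Ioc_sinrDensity hq)
    ((continuous_const.sub (continuous_sinrSurvival hq.le)).continuousAt.congr hF.symm)
    (d := fun n => √(π / 2) / β n) (k := fun n => β n / √(2 * π))
    (tendsto_const_nhds.div_atTop hβ_top)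
    ((hβ_top.eventually_gt_atTop 0).mono fun n hn => by positivity)
    ((hβ_top.eventually_gt_atTop 0).mono fun n hn => by
      rw [← sqrt_pi_div_two_div_sqrt_two_mul_pi]; field_simp)
  rw [hF.eq_of_nhds, sinrSurvival] at hlim
  rw [← hθ]
  refine hlim.congr' ?_
  filter_upwards [eventually_gt_atTop 0] with n hn
  have hWn : W n = ramp θ (√(π / 2) / β n) (β n / √(2 * π)) :=
    funext fun t => by rw [hW n hn, hρ n hn, hϑ n hn, ramp]
  refine setIntegral_congr_fun measurableSet_Ioi fun z hz => ?_
  rw [hWn, hf z hz, sinrDensity, sinrSurvival]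
  ring

/-- In the large-blocklength limit the approximated outage probability
converges to the classical outage probability `Pr[SINR < γ_th]` with SINR
threshold `γ_th = 2^R − 1`:
`lim_{n→∞} ∫_0^∞ W_n(z) f(z) dz = F(2^R − 1)`. -/
theorem stmt_12
    (α ζ lam ξ R : ℝ) (hα : 2 < α) (hζ : 0 ≤ ζ) (hlam : 0 ≤ lam) (hξ : 0 ≤ ξ)
    (hR : 0 < R) (hpos : 0 < ζ * lam ∨ 0 < ξ)
    (f : ℝ → ℝ)
    (hf : ∀ z > (0:ℝ), f z = (2 * ζ * lam / α * z ^ (2/α - 1) + ξ) *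
      Real.exp (-(ζ * lam * z ^ (2/α)) - ξ * z))
    (θ : ℝ) (hθ : θ = 2 ^ R - 1)
    (β ϑ ρ : ℝ → ℝ)
    (hβ : ∀ n > (0:ℝ), β n = Real.sqrt (n / (2 * Real.pi)) * (2 ^ (2 * R) - 1) ^ (-(1:ℝ)/2))
    (hϑ : ∀ n > (0:ℝ), ϑ n = θ + Real.sqrt (Real.pi / 2) / β n)
    (hρ : ∀ n > (0:ℝ), ρ n = θ - Real.sqrt (Real.pi / 2) / β n)
    (W : ℝ → ℝ → ℝ)
    (hW : ∀ n > (0:ℝ), ∀ t, W n t = if t ≤ ρ n then 1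
      else if t < ϑ n then 1/2 - β n / Real.sqrt (2 * Real.pi) * (t - θ) else 0) :
    Tendsto (fun n => ∫ z in Set.Ioi (0:ℝ), W n z * f z) atTop
      (nhds (1 - Real.exp (-(ζ * lam * (2 ^ R - 1) ^ (2/α)) - ξ * (2 ^ R - 1)))) :=
  stmt_12_general α ζ lam ξ R hα hζ hlam hξ hR f hf θ hθ β ϑ ρ hβ hϑ hρ W hW
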